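/- Let W be a plane in P⁵ meeting a curve C at three non-collinear points p, q, r, and let F be a cubic form on P⁵ vanishing to order 3 at every point of C. Then F vanishes identically on W. -/

import Mathlib

/-!
If a cubic form `F` vanishes to order 3 at `s`, then its restriction to the line `t ↦ s + t • y`
is `a * t ^ 3` for some `a`. By homogeneity, `F (y + ε • s) = ε ^ 3 * F (s + ε⁻¹ • y) = a` for
all `ε ≠ 0`, so the restriction of `F` to the line through `y` in direction `s` is constant and
`F (s + y) = F y`. Since `p, q, r` span `W`, a point of `W` is `x = a • p + b • q + c • r`;
as `F` also vanishes to order 3 at `a • p`, `b • q` and `c • r`,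
`F x = F (b • q + c • r) = F (c • r) = 0`.
-/

open MvPolynomial

namespace Polynomial

variable {R : Type*} [Semiring R]

theorem eq_C_mul_X_pow_of_natDegree_le_of_coeff_eq_zero {p : R[X]} {n : ℕ}
    (hdeg : p.natDegree ≤ n) (hlow : ∀ k < n, p.coeff k = 0) : p = C (p.coeff n) * X ^ n := by
  ext k
  rw [coeff_C_mul_X_pow]
  split_ifs with hk
  · rw [hk]
  · rcases lt_or_gt_of_ne hk with hk | hk
    · exact hlow k hk
    · exact coeff_eq_zero_of_natDegree_lt (hdeg.trans_lt hk)

end Polynomial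

namespace MvPolynomial

section CommSemiring

variable {σ R : Type*} [CommSemiring R]

theorem IsHomogeneous.eval_smul {F : MvPolynomial σ R} {n : ℕ} (hF : F.IsHomogeneous n)
    (c : R) (x : σ → R) : eval (c • x) F = c ^ n * eval x F := by
  rw [eval_eq, eval_eq, Finset.mul_sum]
  refine Finset.sum_congr rfl fun d hd => ?_
  simp only [Pi.smul_apply, smul_eq_mul, mul_pow, Finset.prod_mul_distrib,
    Finset.prod_pow_eq_pow_sum, ← hF.degree_eq_sum_deg_support hd]
  ring

def VanishesToOrderThree (F : MvPolynomial σ R) (s : σ → R) : Prop :=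
  eval s F = 0 ∧ (∀ i, eval s (pderiv i F) = 0) ∧ ∀ i j, eval s (pderiv i (pderiv j F)) = 0

theorem VanishesToOrderThree.smul {s : σ → R} {F : MvPolynomial σ R} {n : ℕ}
    (hF : F.IsHomogeneous n) (hs : VanishesToOrderThree F s) (c : R) :
    VanishesToOrderThree F (c • s) := by
  obtain ⟨h0, h1, h2⟩ := hs
  refine ⟨?_, fun i => ?_, fun i j => ?_⟩
  · rw [hF.eval_smul, h0, mul_zero]
  · rw [hF.pderiv.eval_smul, h1, mul_zero]
  · rw [hF.pderiv.pderiv.eval_smul, h2, mul_zero]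

theorem derivative_aeval [Fintype σ] (g : σ → Polynomial R) (F : MvPolynomial σ R) :
    Polynomial.derivative (aeval g F) =
      ∑ i, Polynomial.derivative (g i) * aeval g (pderiv i F) := by
  classical
  induction F using MvPolynomial.induction_on with
  | C a => simp
  | add f g hf hg => simp [hf, hg, mul_add, Finset.sum_add_distrib]
  | mul_X f j hf =>
    simp [hf, pderiv_X, Pi.single_apply, apply_ite, Finset.sum_add_distrib, add_mul,
      Finset.mul_sum, mul_assoc, mul_comm]

theorem natDegree_aeval_le_totalDegree {g : σ → Polynomial R} (hg : ∀ i, (g i).natDegree ≤ 1)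
    (F : MvPolynomial σ R) : (aeval g F).natDegree ≤ F.totalDegree := by
  conv_lhs => rw [F.as_sum, map_sum]
  refine Polynomial.natDegree_sum_le_of_forall_le _ _ fun d hd => ?_
  rw [aeval_monomial, ← Polynomial.C_eq_algebraMap]
  refine (Polynomial.natDegree_C_mul_le _ _).trans <| (Polynomial.natDegree_prod_le _ _).trans ?_
  refine (Finset.sum_le_sum fun i _ => Polynomial.natDegree_pow_le_of_le _ (hg i)).trans ?_
  simpa [Finsupp.sum] using le_totalDegree hd

noncomputable def restrictToLine (s y : σ → R) : MvPolynomial σ R →ₐ[R] Polynomial R :=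
  aeval fun i => Polynomial.C (s i) + Polynomial.C (y i) * Polynomial.X

variable (s y : σ → R)

theorem eval_restrictToLine (F : MvPolynomial σ R) (t : R) :
    (restrictToLine s y F).eval t = eval (s + t • y) F := by
  rw [← Polynomial.coe_aeval_eq_eval, restrictToLine, comp_aeval_apply, aeval_eq_eval]
  congr
  funext i
  simp [mul_comm (y i) t]

theorem coeff_zero_restrictToLine (F : MvPolynomial σ R) :
    (restrictToLine s y F).coeff 0 = eval s F := by
  rw [Polynomial.coeff_zero_eq_eval_zero, eval_restrictToLine, zero_smul, add_zero]

theorem natDegree_restrictToLine_le (F : MvPolynomial σ R) :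
    (restrictToLine s y F).natDegree ≤ F.totalDegree :=
  natDegree_aeval_le_totalDegree (fun i => by compute_degree!) F

theorem coeff_succ_restrictToLine [Fintype σ] (F : MvPolynomial σ R) (n : ℕ) :
    (restrictToLine s y F).coeff (n + 1) * (n + 1) =
      ∑ i, y i * (restrictToLine s y (pderiv i F)).coeff n := by
  rw [← Polynomial.coeff_derivative, restrictToLine, derivative_aeval, Polynomial.finsetSum_coeff]
  refine Finset.sum_congr rfl fun i _ => ?_
  rw [show Polynomial.derivative (Polynomial.C (s i) + Polynomial.C (y i) * Polynomial.X) =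
    Polynomial.C (y i) by simp, Polynomial.coeff_C_mul]

end CommSemiring

section Field

variable {σ K : Type*} [Fintype σ] [Field K] [CharZero K] {F : MvPolynomial σ K} {s : σ → K}

theorem VanishesToOrderThree.coeff_restrictToLine_eq_zero (hs : VanishesToOrderThree F s)
    (y : σ → K) : ∀ k < 3, (restrictToLine s y F).coeff k = 0 := by
  obtain ⟨h0, h1, h2⟩ := hs
  intro k hk
  interval_cases k
  · rw [coeff_zero_restrictToLine, h0]
  · simpa [coeff_zero_restrictToLine, h1] using coeff_succ_restrictToLine s y F 0
  · have h1' : ∀ i, (restrictToLine s y (pderiv i F)).coeff 1 = 0 := fun i => by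
      simpa [coeff_zero_restrictToLine, h2] using coeff_succ_restrictToLine s y (pderiv i F) 0
    simpa [h1'] using coeff_succ_restrictToLine s y F 1

theorem IsHomogeneous.eval_add_of_vanishesToOrderThree (hF : F.IsHomogeneous 3)
    (hs : VanishesToOrderThree F s) (y : σ → K) : eval (s + y) F = eval y F := by
  set a := (restrictToLine s y F).coeff 3
  have hline : restrictToLine s y F = Polynomial.C a * Polynomial.X ^ 3 :=
    Polynomial.eq_C_mul_X_pow_of_natDegree_le_of_coeff_eq_zero
      ((natDegree_restrictToLine_le s y F).trans hF.totalDegree_le)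
      (hs.coeff_restrictToLine_eq_zero y)
  have hrescale : ∀ ε ≠ (0 : K), (restrictToLine y s F).eval ε = a := by
    intro ε hε
    rw [eval_restrictToLine, show y + ε • s = ε • (s + ε⁻¹ • y) by
      rw [smul_add, smul_smul, mul_inv_cancel₀ hε, one_smul, add_comm], hF.eval_smul,
      ← eval_restrictToLine, hline]
    simp only [Polynomial.eval_mul, Polynomial.eval_C, Polynomial.eval_pow, Polynomial.eval_X]
    field_simp
  have hconst : restrictToLine y s F = Polynomial.C a :=
    Polynomial.eq_of_infinite_eval_eq _ _ <|
      (Set.finite_singleton 0).infinite_compl.mono fun ε hε => by simpa using hrescale ε hε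
  calc eval (s + y) F = (restrictToLine y s F).eval 1 := by
        rw [eval_restrictToLine, one_smul, add_comm]
    _ = (restrictToLine y s F).eval 0 := by rw [hconst, Polynomial.eval_C, Polynomial.eval_C]
    _ = eval y F := by rw [eval_restrictToLine, zero_smul, add_zero]

end Field

end MvPolynomial

/-- Let `W` be a plane in `ℙ⁵` (a 3-dimensional linear subspace of `ℂ⁶`) meeting a curve
`C` (given by its affine cone, a subset of `ℂ⁶`) at three non-collinear points `p, q, r`,
and let `F` be a cubic form on `ℙ⁵` vanishing to order 3 at every point of `C` (i.e. `F`,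
its first partials, and its second partials vanish along `C`). Then `F` vanishes
identically on `W`. -/
theorem stmt12 (F : MvPolynomial (Fin 6) ℂ) (hF : F.IsHomogeneous 3)
    (Ccurve : Set (Fin 6 → ℂ)) (W : Submodule ℂ (Fin 6 → ℂ))
    (hW : Module.finrank ℂ W = 3)
    (p q r : Fin 6 → ℂ)
    (hp : p ∈ Ccurve ∧ p ∈ W) (hq : q ∈ Ccurve ∧ q ∈ W) (hr : r ∈ Ccurve ∧ r ∈ W)
    (hind : LinearIndependent ℂ ![p, q, r])
    (hvan : ∀ s ∈ Ccurve,
      eval s F = 0 ∧ (∀ i, eval s (pderiv i F) = 0) ∧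
        ∀ i j, eval s (pderiv i (pderiv j F)) = 0) :
    ∀ x ∈ W, eval x F = 0 := by
  have hspan : Submodule.span ℂ (Set.range ![p, q, r]) = W := by
    refine Submodule.eq_of_le_of_finrank_eq ?_ (by simp [finrank_span_eq_card hind, hW])
    simp [Submodule.span_le, Set.insert_subset_iff, hp.2, hq.2, hr.2]
  intro x hx
  obtain ⟨c, rfl⟩ := (Submodule.mem_span_range_iff_exists_fun ℂ).mp (hspan ▸ hx)
  have hvan' : ∀ v ∈ Ccurve, ∀ a : ℂ, VanishesToOrderThree F (a • v) :=
    fun v hv a => VanishesToOrderThree.smul hF (hvan v hv) a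
  rw [Fin.sum_univ_three, add_assoc]
  simp only [Matrix.cons_val_zero, Matrix.cons_val_one, Matrix.cons_val_two]
  rw [hF.eval_add_of_vanishesToOrderThree (hvan' p hp.1 _),
    hF.eval_add_of_vanishesToOrderThree (hvan' q hq.1 _)]
  exact (hvan' r hr.1 _).1
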